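/- Let k be a positive integer and x, y real numbers with |x| < 1 and |kxy| < 1. Then Σ_{n=1}^∞ n · L_k(y:n) · x^n/(1 − x^n) = kyx/(1 − kyx), where the series on the left converges absolutely. -/

import Mathlib

/-!
Write `c = k y` and `a n = n L_k(y:n) = ∑_{d ∣ n} μ(n/d) c^d`, so that `∑_{d ∣ m} a d = c^m` by
Möbius inversion. Expanding `x^n / (1 - x^n)` as a geometric series turns the left-hand side into
the double series `∑_{n, j ≥ 1} a n x^{nj}`, which converges absolutely because
`|a n| ≤ n max(1, |c|)^n` and `max(|x|, |cx|) < 1`. Grouping its terms by `m = nj` gives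
`∑_{m ≥ 1} (∑_{d ∣ m} a d) x^m = ∑_{m ≥ 1} (cx)^m = cx / (1 - cx)`.
-/

open scoped BigOperators

/-- `L_k(y : n) = (1/n) * ∑_{d ∣ n} μ(n/d) k^d y^d`. -/
noncomputable def Lk (k : ℕ) (y : ℝ) (n : ℕ) : ℝ :=
  (1 / (n : ℝ)) *
    ∑ d ∈ n.divisors, ((ArithmeticFunction.moebius (n / d) : ℤ) : ℝ) * (k : ℝ) ^ d * y ^ d

open ArithmeticFunction
open scoped ArithmeticFunction.Moebius

section MoebiusPowSum

variable {R : Type*} [CommRing R]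

def moebiusPowSum (c : R) (n : ℕ) : R :=
  ∑ d ∈ n.divisors, ((μ (n / d) : ℤ) : R) * c ^ d

theorem sum_divisors_moebiusPowSum (c : R) {n : ℕ} (hn : 0 < n) :
    ∑ d ∈ n.divisors, moebiusPowSum c d = c ^ n := by
  refine sum_eq_iff_sum_smul_moebius_eq.mpr (fun m _ => ?_) n hn
  rw [moebiusPowSum, ← Nat.sum_divisorsAntidiagonal' fun d e => ((μ d : ℤ) : R) * c ^ e]
  simp only [zsmul_eq_mul]

end MoebiusPowSum

theorem natCast_mul_Lk (k : ℕ) (y : ℝ) {n : ℕ} (hn : 0 < n) :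
    n * Lk k y n = moebiusPowSum ((k : ℝ) * y) n := by
  have hn' : (n : ℝ) ≠ 0 := Nat.cast_ne_zero.mpr hn.ne'
  simp only [Lk, moebiusPowSum, ← mul_assoc, mul_one_div_cancel hn', one_mul, mul_pow]

section Lambert

variable {𝕜 : Type*} [NormedField 𝕜]

theorem hasSum_pnat_geometric {z : 𝕜} (hz : ‖z‖ < 1) :
    HasSum (fun j : ℕ+ => z ^ (j : ℕ)) (z / (1 - z)) := by
  have hz1 : 1 - z ≠ 0 := sub_ne_zero.mpr fun h => by simp [← h] at hz
  rw [hasSum_pnat_iff (f := fun j => z ^ j), pow_zero, div_add_one hz1, add_sub_cancel, one_div]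
  exact hasSum_geometric_of_norm_lt_one hz

theorem norm_moebiusPowSum_le (c : 𝕜) (n : ℕ) :
    ‖moebiusPowSum c n‖ ≤ n * max 1 ‖c‖ ^ n := by
  calc ‖moebiusPowSum c n‖
      ≤ ∑ d ∈ n.divisors, ‖((μ (n / d) : ℤ) : 𝕜) * c ^ d‖ := norm_sum_le _ _
    _ ≤ ∑ _d ∈ n.divisors, max 1 ‖c‖ ^ n := by
        refine Finset.sum_le_sum fun d hd => ?_
        have hμ : ‖((μ (n / d) : ℤ) : 𝕜)‖ ≤ 1 := by
          rw [← norm_intCast_abs, abs_moebius]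
          split_ifs <;> simp
        rw [norm_mul, norm_pow]
        calc ‖((μ (n / d) : ℤ) : 𝕜)‖ * ‖c‖ ^ d ≤ 1 * max 1 ‖c‖ ^ d := by
              gcongr
              exact le_max_right _ _
          _ ≤ max 1 ‖c‖ ^ n :=
              (one_mul _).trans_le <| pow_le_pow_right₀ (le_max_left _ _) (Nat.divisor_le hd)
    _ ≤ n * max 1 ‖c‖ ^ n := by
        rw [Finset.sum_const, nsmul_eq_mul]
        gcongr
        exact_mod_cast Nat.card_divisors_le_self n

theorem summable_mul_pow_mul_of_norm_le [CompleteSpace 𝕜] {a : ℕ → 𝕜} {x : 𝕜} {M : ℝ}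
    (hM : 1 ≤ M) (ha : ∀ n, ‖a n‖ ≤ n * M ^ n) (hMx : M * ‖x‖ < 1) :
    Summable fun p : ℕ+ × ℕ+ => a p.1 * x ^ (p.1 * p.2 : ℕ) := by
  have hr : ‖M * ‖x‖‖ < 1 := by
    rwa [Real.norm_of_nonneg (by positivity)]
  refine (summable_prod_mul_pow 1 hr).prod_symm.of_norm_bounded fun p => ?_
  simp only [norm_mul, norm_pow, Prod.fst_swap, Prod.snd_swap, pow_one, mul_comm (p.2 : ℕ),
    mul_pow]
  calc ‖a p.1‖ * ‖x‖ ^ (p.1 * p.2 : ℕ) ≤ (p.1 * M ^ (p.1 : ℕ)) * ‖x‖ ^ (p.1 * p.2 : ℕ) := by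
        gcongr
        exact ha _
    _ ≤ (p.1 * M ^ (p.1 * p.2 : ℕ)) * ‖x‖ ^ (p.1 * p.2 : ℕ) := by
        gcongr
        exact Nat.le_mul_of_pos_right _ p.2.pos
    _ = _ := by ring

theorem hasSum_sum_divisors_mul_pow {a : ℕ → 𝕜} {x : 𝕜}
    (h : Summable fun p : ℕ+ × ℕ+ => a p.1 * x ^ (p.1 * p.2 : ℕ)) :
    HasSum (fun m : ℕ+ => (∑ d ∈ (m : ℕ).divisors, a d) * x ^ (m : ℕ))
      (∑' p : ℕ+ × ℕ+, a p.1 * x ^ (p.1 * p.2 : ℕ)) := by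
  rw [← sigmaAntidiagonalEquivProd.summable_iff] at h
  rw [← sigmaAntidiagonalEquivProd.tsum_eq]
  refine h.hasSum.sigma fun m => ?_
  convert hasSum_fintype _
  simp only [Function.comp_apply, sigmaAntidiagonalEquivProd, divisorsAntidiagonalFactors,
    Equiv.coe_fn_mk, PNat.mk_coe]
  rw [Finset.univ_eq_attach, Finset.sum_attach (m : ℕ).divisorsAntidiagonal
    fun q => a q.1 * x ^ (q.1 * q.2), Finset.sum_mul,
    ← Nat.sum_divisorsAntidiagonal fun d _ => a d * x ^ (m : ℕ)]
  refine Finset.sum_congr rfl fun q hq => ?_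
  rw [(Nat.mem_divisorsAntidiagonal.mp hq).1]

theorem hasSum_mul_pow_div_one_sub_pow {a : ℕ → 𝕜} {x : 𝕜} (hx : ‖x‖ < 1)
    (h : Summable fun p : ℕ+ × ℕ+ => a p.1 * x ^ (p.1 * p.2 : ℕ)) :
    HasSum (fun n : ℕ+ => a n * (x ^ (n : ℕ) / (1 - x ^ (n : ℕ))))
      (∑' p : ℕ+ × ℕ+, a p.1 * x ^ (p.1 * p.2 : ℕ)) := by
  refine h.hasSum.prod_fiberwise fun n => ?_
  simpa only [← pow_mul] using (hasSum_pnat_geometric (z := x ^ (n : ℕ))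
    (by simpa using pow_lt_one₀ (norm_nonneg x) hx n.ne_zero)).mul_left (a n)

end Lambert

theorem stmt15_general (k : ℕ) (x y : ℝ) (hx : |x| < 1)
    (hxy : |(k : ℝ) * x * y| < 1) :
    Summable (fun n : ℕ =>
      |((n + 1 : ℕ) : ℝ) * Lk k y (n + 1) * (x ^ (n + 1) / (1 - x ^ (n + 1)))|) ∧
    ∑' n : ℕ, ((n + 1 : ℕ) : ℝ) * Lk k y (n + 1) * (x ^ (n + 1) / (1 - x ^ (n + 1)))
      = (k : ℝ) * y * x / (1 - (k : ℝ) * y * x) := by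
  set c : ℝ := k * y
  have hx' : ‖x‖ < 1 := hx
  have hcx : ‖c * x‖ < 1 := by rw [Real.norm_eq_abs]; convert hxy using 2; ring
  have hM : max 1 ‖c‖ * ‖x‖ < 1 := by
    rw [max_mul_of_nonneg _ _ (norm_nonneg x), one_mul, ← norm_mul]
    exact max_lt hx' hcx
  have hF := summable_mul_pow_mul_of_norm_le (le_max_left 1 ‖c‖) (norm_moebiusPowSum_le c) hM
  have hfibers := hasSum_sum_divisors_mul_pow hF
  simp_rw [sum_divisors_moebiusPowSum c (PNat.pos _), ← mul_pow] at hfibers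
  have hrows := hasSum_mul_pow_div_one_sub_pow hx' hF
  rw [← (hasSum_pnat_geometric hcx).unique hfibers,
    hasSum_pnat_iff_hasSum_succ (f := fun n => moebiusPowSum c n * (x ^ n / (1 - x ^ n)))] at hrows
  have hsum : HasSum (fun n : ℕ => ((n + 1 : ℕ) : ℝ) * Lk k y (n + 1) *
      (x ^ (n + 1) / (1 - x ^ (n + 1)))) (c * x / (1 - c * x)) := by
    simpa only [natCast_mul_Lk k y (Nat.succ_pos _)] using hrows
  exact ⟨hsum.summable.abs, hsum.tsum_eq⟩

theorem stmt15 (k : ℕ) (hk : 0 < k) (x y : ℝ) (hx : |x| < 1)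
    (hxy : |(k : ℝ) * x * y| < 1) :
    Summable (fun n : ℕ =>
      |((n + 1 : ℕ) : ℝ) * Lk k y (n + 1) * (x ^ (n + 1) / (1 - x ^ (n + 1)))|) ∧
    ∑' n : ℕ, ((n + 1 : ℕ) : ℝ) * Lk k y (n + 1) * (x ^ (n + 1) / (1 - x ^ (n + 1)))
      = (k : ℝ) * y * x / (1 - (k : ℝ) * y * x) :=
  stmt15_general k x y hx hxy
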